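/- Optimal mixing probability for the Clifford-plus-phase ensemble: for every c ∈ [−1,1] and every p ∈ [0,1], Δ(p,c) ≤ (1−c) / (8·(4 − 2c + √(14(1−c)))), and equality holds at p = p̃(c) := (4c² + c·√(14(1−c)) − 5c + 1) / (4c² − 2c + 2). Moreover p̃(c) ∈ [0,1], so the maximum of Δ(·,c) over p ∈ [0,1] equals Δ̃(c) := (1−c)/(8(4 − 2c + √(14(1−c)))). -/

import Mathlib

/-- The spectral gap `Δ(p,c)` of the Clifford-plus-phase ensemble on the Clifford-invariant
subspace (Eq. (eq:gap-4)). -/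
noncomputable def cliffordPhaseGap (p c : ℝ) : ℝ :=
  1/4 - (c/4) * (1 - p) -
    (1/8) * Real.sqrt (4*c^2*(p - 1)^2 - 2*c*(p - 4)*(p - 1) + 2*p*(p - 1) + 4)

/-- The optimal Clifford probability `p̃(c)`. -/
noncomputable def pOpt (c : ℝ) : ℝ :=
  (4*c^2 + c * Real.sqrt (14*(1 - c)) - 5*c + 1) / (4*c^2 - 2*c + 2)

/-- The optimal gap `Δ̃(c)`. -/
noncomputable def gapOpt (c : ℝ) : ℝ :=
  (1 - c) / (8 * (4 - 2*c + Real.sqrt (14*(1 - c))))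

/-! With `s = √(14(1-c))` and `ℓ(p) = 2 - 2c(1-p)` we have `8Δ(p,c) = ℓ(p) - √R(p)`, and after
rationalising `Δ̃(c)` the radicand `R` splits, modulo `s² = 14(1-c)`, as the sum of squares
`R(p) = (ℓ(p) - 8Δ̃(c))² + 2(1-c)(p - p̃(c))²`. Hence `√R(p) ≥ ℓ(p) - 8Δ̃(c)`, i.e. `Δ(p,c) ≤ Δ̃(c)`,
with equality at `p = p̃(c)`, where `ℓ(p̃) - 8Δ̃ = s/2 ≥ 0`. -/

namespace CliffordPhase

open Real

def linearPart (p c : ℝ) : ℝ := 2 - 2*c*(1 - p)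

def radicand (p c : ℝ) : ℝ := 4*c^2*(p - 1)^2 - 2*c*(p - 4)*(p - 1) + 2*p*(p - 1) + 4

lemma cliffordPhaseGap_eq (p c : ℝ) :
    cliffordPhaseGap p c = (linearPart p c - √(radicand p c)) / 8 := by
  rw [cliffordPhaseGap, linearPart, radicand]
  ring

lemma pOpt_denom_pos (c : ℝ) : 0 < 4*c^2 - 2*c + 2 := by
  nlinarith [sq_nonneg (2*c - 1/2)]

lemma gapOpt_eq_div {c : ℝ} (hc : c ≤ 1) :
    gapOpt c = (1 - c) * (4 - 2*c - √(14*(1 - c))) / (8 * (4*c^2 - 2*c + 2)) := by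
  have hs : √(14*(1 - c)) ^ 2 = 14*(1 - c) := sq_sqrt (by linarith)
  have hden : 0 < 4 - 2*c + √(14*(1 - c)) := by linarith [sqrt_nonneg (14*(1 - c))]
  rw [gapOpt, div_eq_div_iff (by positivity) (by have := pOpt_denom_pos c; positivity)]
  linear_combination (8*(1 - c)) * hs

lemma radicand_eq_sq_add_sq {c : ℝ} (hc : c ≤ 1) (p : ℝ) :
    radicand p c = (linearPart p c - 8 * gapOpt c)^2 + 2*(1 - c)*(p - pOpt c)^2 := by
  have hs : √(14*(1 - c)) ^ 2 = 14*(1 - c) := sq_sqrt (by linarith)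
  have hD := (pOpt_denom_pos c).ne'
  rw [gapOpt_eq_div hc, pOpt, radicand, linearPart]
  set D := 4*c^2 - 2*c + 2
  set s := √(14*(1 - c))
  field_simp
  linear_combination (-(1 - c) * D / 2) * hs

lemma linearPart_pOpt_sub {c : ℝ} (hc : c ≤ 1) :
    linearPart (pOpt c) c - 8 * gapOpt c = √(14*(1 - c)) / 2 := by
  have hD := (pOpt_denom_pos c).ne'
  rw [gapOpt_eq_div hc, pOpt, linearPart]
  set D := 4*c^2 - 2*c + 2 with hD_def
  field_simp
  rw [hD_def]
  ring

theorem cliffordPhaseGap_le_gapOpt {c : ℝ} (hc : c ≤ 1) (p : ℝ) :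
    cliffordPhaseGap p c ≤ gapOpt c := by
  have hsq : (linearPart p c - 8 * gapOpt c)^2 ≤ radicand p c := by
    rw [radicand_eq_sq_add_sq hc]
    have h1c : 0 ≤ 1 - c := by linarith
    nlinarith [mul_nonneg h1c (sq_nonneg (p - pOpt c))]
  rw [cliffordPhaseGap_eq]
  linarith [le_sqrt_of_sq_le hsq]

theorem cliffordPhaseGap_pOpt {c : ℝ} (hc : c ≤ 1) :
    cliffordPhaseGap (pOpt c) c = gapOpt c := by
  have hR : radicand (pOpt c) c = (√(14*(1 - c)) / 2)^2 := by
    rw [radicand_eq_sq_add_sq hc, linearPart_pOpt_sub hc]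
    ring
  rw [cliffordPhaseGap_eq, hR, sqrt_sq (by positivity), ← linearPart_pOpt_sub hc]
  ring

-- Substituting `c = 1 - s²/14` makes both bounds polynomial inequalities in `s ≥ 0`.
lemma pOpt_mem_Icc {c : ℝ} (hc : c ≤ 1) : pOpt c ∈ Set.Icc 0 1 := by
  have hs : √(14*(1 - c)) ^ 2 = 14*(1 - c) := sq_sqrt (by linarith)
  have h0 := sqrt_nonneg (14*(1 - c))
  set s := √(14*(1 - c))
  have hD := pOpt_denom_pos c
  constructor
  · refine div_nonneg ?_ hD.le
    nlinarith [mul_nonneg h0 (sq_nonneg (s - 3)), mul_nonneg (mul_nonneg h0 h0) h0]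
  · refine (div_le_one hD).mpr ?_
    nlinarith [mul_nonneg h0 (sq_nonneg (s - 3)), mul_nonneg (mul_nonneg h0 h0) h0]

end CliffordPhase

open CliffordPhase in
/-- **Optimal mixing probability for the Clifford-plus-phase ensemble**: for every
`c ∈ [−1,1]`, `Δ(p,c) ≤ Δ̃(c)` for all `p ∈ [0,1]`, with equality at `p = p̃(c)`; moreover
`p̃(c) ∈ [0,1]`, so the maximum of `Δ(·,c)` over `[0,1]` equals `Δ̃(c)`. -/
theorem cliffordPhaseGap_optimal_p (c : ℝ) (hc : c ∈ Set.Icc (-1:ℝ) 1) :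
    (∀ p ∈ Set.Icc (0:ℝ) 1, cliffordPhaseGap p c ≤ gapOpt c) ∧
    cliffordPhaseGap (pOpt c) c = gapOpt c ∧
    pOpt c ∈ Set.Icc (0:ℝ) 1 :=
  ⟨fun p _ => cliffordPhaseGap_le_gapOpt hc.2 p, cliffordPhaseGap_pOpt hc.2,
    pOpt_mem_Icc hc.2⟩
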